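/- arXiv:2507.20912 — 3 statements merged into one kernel-verified Lean document; each statement's English description precedes it below -/
import Mathlib

section
/- Let τ ∈ ℂ with Im τ > 0 and let S ⊆ ℝ be a Borel set. Then the two-dimensional Lebesgue measure of the set {(a, b) ∈ ℝ² : b > 0, |a + bτ|² ≤ Im τ, −a/b ∈ S} equals (1/2)·∫_S Im τ / |τ − t|² dt. -/
/-!
Write a point of the region as `(a, b) = (-b t, b)`. Since `a + bτ = b (τ - t)`, the region is
`{0 < b, b² ≤ P t, t ∈ S}` with `P t = Im τ / |τ - t|²`. For fixed `b > 0` the map `a ↦ -a/b`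
rescales Lebesgue measure by `1/b`, so slicing in `b` and Tonelli give
`∫_S ∫_0^{√(P t)} b db dt = ∫_S P t / 2 dt`.
-/

open MeasureTheory Set

section ConeBelow

variable {g : ℝ → ℝ}

theorem setOf_sq_le_inter_Ioi (c : ℝ) : {b : ℝ | b ^ 2 ≤ c} ∩ Ioi 0 = Ioc 0 √c := by
  ext b
  simp only [mem_inter_iff, mem_ofPred_eq, mem_Ioi, mem_Ioc]
  constructor
  · rintro ⟨hbc, hb⟩
    exact ⟨hb, (Real.le_sqrt hb.le (le_trans (sq_nonneg b) hbc)).2 hbc⟩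
  · rintro ⟨hb, hbc⟩
    have hc : 0 ≤ c := by
      by_contra! hc
      rw [Real.sqrt_eq_zero_of_nonpos hc.le] at hbc
      linarith
    exact ⟨(Real.le_sqrt hb.le hc).1 hbc, hb⟩

theorem lintegral_Ioi_indicator_sq_le (c : ℝ) :
    ∫⁻ b in Ioi 0, {b : ℝ | b ^ 2 ≤ c}.indicator ENNReal.ofReal b = ENNReal.ofReal (c / 2) := by
  have hmeas : MeasurableSet {b : ℝ | b ^ 2 ≤ c} :=
    measurableSet_le (by fun_prop) measurable_const
  have hint : IntegrableOn (fun b : ℝ => b) (Ioc 0 √c) := continuous_id.integrableOn_Ioc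
  rw [lintegral_indicator hmeas, Measure.restrict_restrict hmeas, setOf_sq_le_inter_Ioi,
    ← ofReal_integral_eq_lintegral_ofReal hint
      ((ae_restrict_mem measurableSet_Ioc).mono fun b hb => hb.1.le),
    ← intervalIntegral.integral_of_le (Real.sqrt_nonneg c), integral_id]
  rcases le_total 0 c with hc | hc
  · rw [Real.sq_sqrt hc]; ring_nf
  · simp [Real.sqrt_eq_zero_of_nonpos hc, ENNReal.ofReal_of_nonpos (by linarith : c / 2 ≤ 0)]

def coneBelow (g : ℝ → ℝ) (S : Set ℝ) : Set (ℝ × ℝ) :=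
  {p | 0 < p.2 ∧ p.2 ^ 2 ≤ g (-p.1 / p.2) ∧ -p.1 / p.2 ∈ S}

theorem measurableSet_coneBelow (hg : Measurable g) {S : Set ℝ} (hS : MeasurableSet S) :
    MeasurableSet (coneBelow g S) := by
  have hslope : Measurable fun p : ℝ × ℝ => -p.1 / p.2 := by fun_prop
  exact (measurableSet_lt measurable_const measurable_snd).inter
    ((measurableSet_le (by fun_prop) (hg.comp hslope)).inter (hslope hS))

theorem volume_coneBelow_slice {S : Set ℝ} {b : ℝ} (hb : 0 < b) :
    volume ((fun a => (a, b)) ⁻¹' coneBelow g S) =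
      ENNReal.ofReal b * volume ({t | b ^ 2 ≤ g t} ∩ S) := by
  have hslice : (fun a => (a, b)) ⁻¹' coneBelow g S = ((-b)⁻¹ * ·) ⁻¹' ({t | b ^ 2 ≤ g t} ∩ S) := by
    ext a
    have hslope : (-b)⁻¹ * a = -a / b := by field_simp
    simp only [mem_preimage, coneBelow, mem_ofPred_eq, mem_inter_iff, hslope, hb, true_and]
  rw [hslice, Real.volume_preimage_mul_left (by simpa using hb.ne'), inv_inv, abs_neg,
    abs_of_pos hb]

theorem volume_coneBelow (hg : Measurable g) {S : Set ℝ} (hS : MeasurableSet S) :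
    volume (coneBelow g S) = ∫⁻ t in S, ENNReal.ofReal (g t / 2) := by
  set F : ℝ × ℝ → ENNReal := {p | p.1 ^ 2 ≤ g p.2}.indicator fun p => ENNReal.ofReal p.1
  have hF : Measurable F :=
    (Measurable.ennreal_ofReal measurable_fst).indicator
      (measurableSet_le (by fun_prop) (hg.comp measurable_snd))
  have hslice : ∀ b, volume ((fun a => (a, b)) ⁻¹' coneBelow g S) =
      (Ioi 0).indicator (fun b => ∫⁻ t in S, F (b, t)) b := by
    intro b
    rcases lt_or_ge 0 b with hb | hb
    · have hmeas : MeasurableSet {t | b ^ 2 ≤ g t} := measurableSet_le measurable_const hg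
      rw [volume_coneBelow_slice hb, indicator_of_mem (mem_Ioi.2 hb),
        ← Measure.restrict_apply hmeas, ← setLIntegral_const, ← lintegral_indicator hmeas]
      rfl
    · rw [indicator_of_notMem (notMem_Ioi.2 hb)]
      convert measure_empty (μ := volume)
      ext a
      simp [coneBelow, not_lt.2 hb]
  calc volume (coneBelow g S)
      = ∫⁻ b in Ioi 0, ∫⁻ t in S, F (b, t) := by
        rw [Measure.volume_eq_prod, Measure.prod_apply_symm (measurableSet_coneBelow hg hS)]
        simp_rw [hslice]
        exact lintegral_indicator measurableSet_Ioi _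
    _ = ∫⁻ t in S, ∫⁻ b in Ioi 0, F (b, t) := lintegral_lintegral_swap hF.aemeasurable
    _ = ∫⁻ t in S, ENNReal.ofReal (g t / 2) :=
        lintegral_congr fun t => lintegral_Ioi_indicator_sq_le (g t)

end ConeBelow

theorem norm_sub_ofReal_pos {τ : ℂ} (hτ : 0 < τ.im) (t : ℝ) : 0 < ‖τ - (t : ℂ)‖ := by
  refine norm_pos_iff.2 fun h => hτ.ne' ?_
  simpa using congrArg Complex.im h

theorem norm_ofReal_add_ofReal_mul_sq (τ : ℂ) (a : ℝ) {b : ℝ} (hb : b ≠ 0) :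
    ‖(a : ℂ) + (b : ℂ) * τ‖ ^ 2 = b ^ 2 * ‖τ - ((-a / b : ℝ) : ℂ)‖ ^ 2 := by
  have hfactor : (a : ℂ) + (b : ℂ) * τ = (b : ℂ) * (τ - ((-a / b : ℝ) : ℂ)) := by
    have hbC : (b : ℂ) ≠ 0 := Complex.ofReal_ne_zero.2 hb
    push_cast
    field_simp
    ring
  rw [hfactor, norm_mul, Complex.norm_real, Real.norm_eq_abs, mul_pow, sq_abs]

/-- The Lebesgue measure of the part of the extremal-length unit ball at `τ` lying over a
Borel set `S` of boundary directions equals `(1/2)·∫_S Im τ/|τ − t|² dt`: the normalized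
Thurston measure of the cone over `S` is the harmonic measure of `S` at `τ`. -/
theorem stmt7 (τ : ℂ) (hτ : 0 < τ.im) (S : Set ℝ) (hS : MeasurableSet S) :
    (volume {p : ℝ × ℝ | 0 < p.2 ∧
        ‖(p.1 : ℂ) + (p.2 : ℂ) * τ‖ ^ 2 ≤ τ.im ∧ -p.1 / p.2 ∈ S}).toReal
      = (1 / 2) * ∫ t in S, τ.im / ‖τ - (t : ℂ)‖ ^ 2 := by
  set P : ℝ → ℝ := fun t => τ.im / ‖τ - (t : ℂ)‖ ^ 2
  have hP : Continuous P :=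
    continuous_const.div (by fun_prop) fun t => (pow_pos (norm_sub_ofReal_pos hτ t) 2).ne'
  have hset : {p : ℝ × ℝ | 0 < p.2 ∧ ‖(p.1 : ℂ) + (p.2 : ℂ) * τ‖ ^ 2 ≤ τ.im ∧ -p.1 / p.2 ∈ S}
      = coneBelow P S := by
    ext ⟨a, b⟩
    simp only [coneBelow, mem_ofPred_eq, and_congr_right_iff]
    intro hb
    rw [norm_ofReal_add_ofReal_mul_sq τ a hb.ne',
      ← le_div_iff₀ (pow_pos (norm_sub_ofReal_pos hτ _) 2)]
  rw [hset, volume_coneBelow hP.measurable hS, ← integral_eq_lintegral_of_nonneg_ae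
      (ae_of_all _ fun t => by positivity) (hP.div_const 2).aestronglyMeasurable, integral_div]
  ring
end

section
/- Let (x₁, y₁) and (x₂, y₂) be points of ℝ². If |p·y₁ + q·x₁| = |p·y₂ + q·x₂| for every pair of coprime integers p, q, then (x₁, y₁) = (x₂, y₂) or (x₁, y₁) = (−x₂, −y₂). -/
/-- A measured foliation on the torus is determined up to sign by its intersection numbers
with simple closed curves: if `|p·y₁ + q·x₁| = |p·y₂ + q·x₂|` for every pair of coprime
integers `p, q`, then `(x₁, y₁) = ±(x₂, y₂)`. -/
theorem stmt10 (x₁ y₁ x₂ y₂ : ℝ)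
    (h : ∀ p q : ℤ, Int.gcd p q = 1 →
      |(p : ℝ) * y₁ + (q : ℝ) * x₁| = |(p : ℝ) * y₂ + (q : ℝ) * x₂|) :
    (x₁ = x₂ ∧ y₁ = y₂) ∨ (x₁ = -x₂ ∧ y₁ = -y₂) := by
  have h1 := h 0 1 (by decide)
  have h2 := h 1 0 (by decide)
  have h3 := h 1 1 (by decide)
  push_cast at h1 h2 h3
  simp only [zero_mul, one_mul, zero_add, add_zero] at h1 h2 h3
  have hx : x₁ ^ 2 = x₂ ^ 2 := by rw [← sq_abs, ← sq_abs x₂, h1]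
  have hy : y₁ ^ 2 = y₂ ^ 2 := by rw [← sq_abs, ← sq_abs y₂, h2]
  have hs : (y₁ + x₁) ^ 2 = (y₂ + x₂) ^ 2 := by
    rw [← sq_abs, ← sq_abs (y₂ + x₂), h3]
  have hxy : x₁ * y₁ = x₂ * y₂ := by nlinarith
  rcases sq_eq_sq_iff_eq_or_eq_neg.mp hx with hxe | hxe <;>
    rcases sq_eq_sq_iff_eq_or_eq_neg.mp hy with hye | hye
  · exact Or.inl ⟨hxe, hye⟩
  · have h0 : x₂ * y₂ = 0 := by rw [hxe, hye] at hxy; nlinarith [hxy]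
    rcases mul_eq_zero.mp h0 with h0 | h0
    · exact Or.inr ⟨by rw [hxe, h0, neg_zero], hye⟩
    · exact Or.inl ⟨hxe, by rw [hye, h0, neg_zero]⟩
  · have h0 : x₂ * y₂ = 0 := by rw [hxe, hye] at hxy; nlinarith [hxy]
    rcases mul_eq_zero.mp h0 with h0 | h0
    · exact Or.inl ⟨by rw [hxe, h0, neg_zero], hye⟩
    · exact Or.inr ⟨hxe, by rw [hye, h0, neg_zero]⟩
  · exact Or.inr ⟨hxe, hye⟩
end

section
/- Let G be a countably infinite group acting by measurable bijections on a measurable space X, let μ be a G-quasi-invariant probability measure on X, and let W ⊆ X be a measurable wandering set (μ(W ∩ g•W) = 0 for every g ≠ 1). For each g ∈ G let D_g denote the Radon–Nikodym derivative of the pushforward g_*μ with respect to μ. Then for μ-almost every x ∈ W and every ε > 0, the set {g ∈ G : D_g(x) ≥ ε} is finite; in particular D_{g_n}(x) → 0 as n → ∞ for every sequence (g_n) of pairwise distinct elements of G. -/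
open MeasureTheory Pointwise ENNReal

/-!
The translates `g⁻¹ • W` of a wandering set are pairwise almost disjoint (this uses
quasi-invariance), so `∑ g, μ (g⁻¹ • W) ≤ μ X < ∞`. Since `∫_W D_g dμ ≤ (g_*μ) W = μ (g⁻¹ • W)`,
the function `∑ g, D_g` is integrable on `W`, hence finite almost everywhere on `W`; at such a
point the summable family `g ↦ D_g x` has finite superlevel sets and tends to `0` along the
cofinite filter.
-/

open Filter Function Topology

theorem ENNReal.tendsto_comp_injective_zero_of_tsum_ne_top {ι : Type*} {f : ι → ℝ≥0∞}
    (hf : ∑' i, f i ≠ ∞) {u : ℕ → ι} (hu : Injective u) :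
    Tendsto (f ∘ u) atTop (𝓝 0) :=
  (ENNReal.tendsto_cofinite_zero_of_tsum_ne_top hf).comp
    (Nat.cofinite_eq_atTop ▸ hu.tendsto_cofinite)

section RadonNikodym

variable {ι X : Type*} [Countable ι] [MeasurableSpace X]

theorem MeasureTheory.Measure.setLIntegral_tsum_rnDeriv_le (ν : ι → Measure X) (μ : Measure X)
    (s : Set X) : ∫⁻ x in s, ∑' i, (ν i).rnDeriv μ x ∂μ ≤ ∑' i, ν i s := by
  rw [lintegral_tsum fun i => (Measure.measurable_rnDeriv _ _).aemeasurable]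
  exact ENNReal.tsum_le_tsum fun i => Measure.setLIntegral_rnDeriv_le s

theorem MeasureTheory.Measure.ae_tsum_rnDeriv_ne_top {ν : ι → Measure X} {μ : Measure X}
    {s : Set X} (hs : MeasurableSet s) (hν : ∑' i, ν i s ≠ ∞) :
    ∀ᵐ x ∂μ, x ∈ s → ∑' i, (ν i).rnDeriv μ x ≠ ∞ := by
  rw [← ae_restrict_iff' hs]
  refine (ae_lt_top (Measurable.tsum fun i => Measure.measurable_rnDeriv _ _) ?_).mono
    fun _ => LT.lt.ne
  exact ((setLIntegral_tsum_rnDeriv_le ν μ s).trans_lt hν.lt_top).ne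

end RadonNikodym

section Wandering

variable {G X : Type*} [Group G] [MulAction G X] [MeasurableSpace X] {μ : Measure X} {W : Set X}

theorem pairwise_aedisjoint_preimage_smul_of_wandering
    (hmeas : ∀ g : G, Measurable (fun x : X => g • x))
    (hqi : ∀ g : G, μ.map (fun x : X => g • x) ≪ μ) (hW : MeasurableSet W)
    (hwand : ∀ g : G, g ≠ 1 → μ (W ∩ g • W) = 0) :
    Pairwise (AEDisjoint μ on fun g : G => (fun x : X => g • x) ⁻¹' W) := by
  intro g h hgh
  have hne : g * h⁻¹ ≠ 1 := fun h1 => hgh (mul_inv_eq_one.mp h1)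
  -- `h • x ∈ W` iff `g • x = (g * h⁻¹) • (h • x) ∈ (g * h⁻¹) • W`
  have hinter : (fun x : X => g • x) ⁻¹' W ∩ (fun x : X => h • x) ⁻¹' W =
      (fun x : X => g • x) ⁻¹' (W ∩ (g * h⁻¹) • W) := by
    ext x
    simp only [Set.mem_inter_iff, Set.mem_preimage, Set.mem_smul_set_iff_inv_smul_mem, smul_smul,
      mul_inv_rev, inv_inv, inv_mul_cancel_right]
  have hmeas_inter : MeasurableSet (W ∩ (g * h⁻¹) • W) := by
    rw [← inv_inv (g * h⁻¹), ← Set.preimage_smul]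
    exact hW.inter (hmeas _ hW)
  change μ (_ ∩ _) = 0
  rw [hinter, ← Measure.map_apply (hmeas g) hmeas_inter]
  exact hqi g (hwand _ hne)

theorem tsum_map_smul_apply_le_measure_univ_of_wandering [Countable G]
    (hmeas : ∀ g : G, Measurable (fun x : X => g • x))
    (hqi : ∀ g : G, μ.map (fun x : X => g • x) ≪ μ) (hW : MeasurableSet W)
    (hwand : ∀ g : G, g ≠ 1 → μ (W ∩ g • W) = 0) :
    ∑' g : G, μ.map (fun x : X => g • x) W ≤ μ Set.univ := by
  simp only [Measure.map_apply (hmeas _) hW]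
  rw [← measure_iUnion₀ (pairwise_aedisjoint_preimage_smul_of_wandering hmeas hqi hW hwand)
    fun g => (hmeas g hW).nullMeasurableSet]
  exact measure_mono (Set.subset_univ _)

end Wandering

theorem stmt13_general {G X : Type*} [Group G] [Countable G] [MeasurableSpace X]
    [MulAction G X]
    (hmeas : ∀ g : G, Measurable (fun x : X => g • x))
    (μ : Measure X) [IsProbabilityMeasure μ]
    (hqi : ∀ g : G, μ.map (fun x : X => g • x) ≪ μ)
    (W : Set X) (hW : MeasurableSet W)
    (hwand : ∀ g : G, g ≠ 1 → μ (W ∩ g • W) = 0) :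
    ∀ᵐ x ∂μ, x ∈ W →
      (∀ ε : ℝ≥0∞, 0 < ε →
        {g : G | ε ≤ (μ.map (fun y : X => g • y)).rnDeriv μ x}.Finite) ∧
      (∀ gseq : ℕ → G, Function.Injective gseq →
        Filter.Tendsto (fun n : ℕ => (μ.map (fun y : X => gseq n • y)).rnDeriv μ x)
          Filter.atTop (nhds 0)) := by
  have hsum : ∑' g : G, μ.map (fun x : X => g • x) W ≠ ∞ :=
    ((tsum_map_smul_apply_le_measure_univ_of_wandering hmeas hqi hW hwand).trans_lt
      (measure_lt_top μ _)).ne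
  filter_upwards [Measure.ae_tsum_rnDeriv_ne_top hW hsum] with x hx hxW
  exact ⟨fun ε hε => ENNReal.finite_const_le_of_tsum_ne_top (hx hxW) hε.ne',
    fun gseq hinj => ENNReal.tendsto_comp_injective_zero_of_tsum_ne_top (hx hxW) hinj⟩

/-- Let a countably infinite group `G` act by measurable bijections on a measurable space
`X`, let `μ` be a `G`-quasi-invariant probability measure, and let `W` be a wandering set.
Then at `μ`-almost every point `x` of `W`, for every `ε > 0` only finitely many
Radon–Nikodym derivatives `D_g = d(g_*μ)/dμ` satisfy `D_g(x) ≥ ε`; in particular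
`D_{g_n}(x) → 0` along every sequence of pairwise distinct elements of `G`. -/
theorem stmt13 {G X : Type*} [Group G] [Countable G] [Infinite G] [MeasurableSpace X]
    [MulAction G X]
    (hmeas : ∀ g : G, Measurable (fun x : X => g • x))
    (μ : Measure X) [IsProbabilityMeasure μ]
    (hqi : ∀ g : G, μ.map (fun x : X => g • x) ≪ μ)
    (W : Set X) (hW : MeasurableSet W)
    (hwand : ∀ g : G, g ≠ 1 → μ (W ∩ g • W) = 0) :
    ∀ᵐ x ∂μ, x ∈ W →
      (∀ ε : ℝ≥0∞, 0 < ε →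
        {g : G | ε ≤ (μ.map (fun y : X => g • y)).rnDeriv μ x}.Finite) ∧
      (∀ gseq : ℕ → G, Function.Injective gseq →
        Filter.Tendsto (fun n : ℕ => (μ.map (fun y : X => gseq n • y)).rnDeriv μ x)
          Filter.atTop (nhds 0)) :=
  stmt13_general hmeas μ hqi W hW hwand
end
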